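/- arXiv:2004.12346 — 3 statements merged into one kernel-verified Lean document; each statement's English description precedes it below -/
import Mathlib

section
/- Suppose real numbers α'_{i} satisfy α'_i = α_i (1 - μM⁺_i - μM⁻_i) + α_{i+1} μ M⁺_i + α_{i-1} μ M⁻_i - f(α_i) s_i, where 0 ≤ M⁺_i, M⁻_i ≤ Lip(g)·U, μ·2·Lip(g)·U ≤ 1, f is Lipschitz with constant Lf and f(0) = f₀, and |s_i| ≤ S. Then sup_i |α'_i| ≤ sup_i |α_i| (1 + Lf · S) + |f₀| · S. -/
/-! The CFL condition makes the three transport weights nonnegative, and they sum to one, so the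
transport part of the update is a convex combination of values bounded by `A`. The source term
adds at most `|f(α i)| · S ≤ (|f₀| + Lf · A) · S`. -/

theorem abs_mul_add_mul_add_mul_le {R : Type*} [Ring R] [LinearOrder R] [IsStrictOrderedRing R]
    {x y z a b c A : R} (ha : 0 ≤ a) (hb : 0 ≤ b) (hc : 0 ≤ c) (habc : a + b + c = 1)
    (hx : |x| ≤ A) (hy : |y| ≤ A) (hz : |z| ≤ A) :
    |x * a + y * b + z * c| ≤ A :=
  calc |x * a + y * b + z * c| ≤ |x| * a + |y| * b + |z| * c := by
        simpa only [abs_mul, abs_of_nonneg ha, abs_of_nonneg hb, abs_of_nonneg hc]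
          using abs_add_three (x * a) (y * b) (z * c)
    _ ≤ A * a + A * b + A * c := by gcongr
    _ = A := by rw [← mul_add, ← mul_add, habc, mul_one]

theorem one_sub_mul_sub_mul_nonneg_of_cfl {R : Type*} [CommRing R] [LinearOrder R]
    [IsStrictOrderedRing R] {μ p m K : R} (hμ : 0 ≤ μ) (hp : p ≤ K) (hm : m ≤ K)
    (hcfl : μ * 2 * K ≤ 1) :
    0 ≤ 1 - μ * p - μ * m := by
  nlinarith [mul_le_mul_of_nonneg_left hp hμ, mul_le_mul_of_nonneg_left hm hμ]

theorem abs_apply_le_abs_apply_zero_add_of_lipschitz {f : ℝ → ℝ} {K : ℝ}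
    (hf : ∀ x y, |f x - f y| ≤ K * |x - y|) (x : ℝ) :
    |f x| ≤ |f 0| + K * |x| := by
  have h := hf x 0
  rw [sub_zero] at h
  linarith [abs_sub_abs_le_abs_sub (f x) (f 0)]

theorem convex_combination_sup_bound_general
    (α α' : ℤ → ℝ) (Mp Mm s : ℤ → ℝ) (f : ℝ → ℝ)
    (μ L U S Lf f₀ A : ℝ)
    (hμ : 0 ≤ μ)
    (hMp : ∀ i, 0 ≤ Mp i ∧ Mp i ≤ L * U)
    (hMm : ∀ i, 0 ≤ Mm i ∧ Mm i ≤ L * U)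
    (hCFL : μ * 2 * L * U ≤ 1)
    (hf_lip : ∀ x y, |f x - f y| ≤ Lf * |x - y|)
    (hLf : 0 ≤ Lf)
    (hf0 : f 0 = f₀)
    (hs : ∀ i, |s i| ≤ S)
    (hscheme : ∀ i, α' i = α i * (1 - μ * Mp i - μ * Mm i)
        + α (i + 1) * (μ * Mp i) + α (i - 1) * (μ * Mm i) - f (α i) * s i)
    (hA : ∀ i, |α i| ≤ A) :
    ∀ i, |α' i| ≤ A * (1 + Lf * S) + |f₀| * S := by
  intro i
  obtain ⟨hMp0, hMpLU⟩ := hMp i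
  obtain ⟨hMm0, hMmLU⟩ := hMm i
  have hweight : 0 ≤ 1 - μ * Mp i - μ * Mm i :=
    one_sub_mul_sub_mul_nonneg_of_cfl hμ hMpLU hMmLU (by linarith)
  have htransport : |α i * (1 - μ * Mp i - μ * Mm i) + α (i + 1) * (μ * Mp i)
      + α (i - 1) * (μ * Mm i)| ≤ A :=
    abs_mul_add_mul_add_mul_le hweight (mul_nonneg hμ hMp0) (mul_nonneg hμ hMm0) (by ring)
      (hA i) (hA (i + 1)) (hA (i - 1))
  have hf_bound : |f (α i)| ≤ |f₀| + Lf * A := by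
    have := abs_apply_le_abs_apply_zero_add_of_lipschitz hf_lip (α i)
    rw [hf0] at this
    linarith [mul_le_mul_of_nonneg_left (hA i) hLf]
  have hsource : |f (α i) * s i| ≤ (|f₀| + Lf * A) * S := by
    rw [abs_mul]
    exact mul_le_mul hf_bound (hs i) (abs_nonneg _) ((abs_nonneg _).trans hf_bound)
  rw [hscheme i]
  calc _ ≤ _ + _ := abs_sub _ _
    _ ≤ A + (|f₀| + Lf * A) * S := add_le_add htransport hsource
    _ = A * (1 + Lf * S) + |f₀| * S := by ring

theorem convex_combination_sup_bound
    (α α' : ℤ → ℝ) (Mp Mm s : ℤ → ℝ) (f : ℝ → ℝ)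
    (μ L U S Lf f₀ A : ℝ)
    (hμ : 0 ≤ μ) (hL : 0 ≤ L) (hU : 0 ≤ U) (hS : 0 ≤ S)
    (hMp : ∀ i, 0 ≤ Mp i ∧ Mp i ≤ L * U)
    (hMm : ∀ i, 0 ≤ Mm i ∧ Mm i ≤ L * U)
    (hCFL : μ * 2 * L * U ≤ 1)
    (hf_lip : ∀ x y, |f x - f y| ≤ Lf * |x - y|)
    (hLf : 0 ≤ Lf)
    (hf0 : f 0 = f₀)
    (hs : ∀ i, |s i| ≤ S)
    (hscheme : ∀ i, α' i = α i * (1 - μ * Mp i - μ * Mm i)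
        + α (i + 1) * (μ * Mp i) + α (i - 1) * (μ * Mm i) - f (α i) * s i)
    (hA : ∀ i, |α i| ≤ A) :
    ∀ i, |α' i| ≤ A * (1 + Lf * S) + |f₀| * S :=
  convex_combination_sup_bound_general α α' Mp Mm s f μ L U S Lf f₀ A hμ hMp hMm hCFL hf_lip hLf hf0
    hs hscheme hA
end

section
/- For a function β : (a,b) → ℝ of bounded variation and a partition a = x₀ < x₁ < … < x_{I+1} = b, the piecewise constant function Π⁰β defined on each interval (x_i, x_{i+1}) as the average of β over that interval has total variation at most the total variation of β, i.e. ∑_{i=1}^{I} |avg_{(x_i,x_{i+1})} β − avg_{(x_{i-1},x_i)} β| ≤ TV(β). -/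
/-!
Let `V t` be the signed variation of `β` from a fixed point `t₀` to `t`. For `u ≤ t` one has
`|β t - β u| ≤ V t - V u`, and since every point of a cell lies left of every point of the next,
averaging over two adjacent cells bounds each jump of `Π⁰β` by the increment of the cell
averages of `V`. These increments telescope to a difference of two averages of `V`, which is at
most the oscillation of `V` on `(a, b)`, i.e. `TV(β)`.
-/

open MeasureTheory

namespace MeasureTheory

variable {α E : Type*} [MeasurableSpace α] {μ : Measure α}
  [NormedAddCommGroup E] [NormedSpace ℝ E]

theorem average_add {f g : α → E} (hf : Integrable f μ) (hg : Integrable g μ) :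
    ⨍ x, f x + g x ∂μ = ⨍ x, f x ∂μ + ⨍ x, g x ∂μ := by
  simp only [average_eq, integral_add hf hg, smul_add]

theorem average_sub {f g : α → E} (hf : Integrable f μ) (hg : Integrable g μ) :
    ⨍ x, f x - g x ∂μ = ⨍ x, f x ∂μ - ⨍ x, g x ∂μ := by
  simp only [average_eq, integral_sub hf hg, smul_sub]

variable {A B : Set α} {f g : α → ℝ}

theorem setAverage_sub_setAverage_le {C : ℝ} (hA₀ : μ A ≠ 0) (hA : μ A ≠ ⊤)
    (hB₀ : μ B ≠ 0) (hB : μ B ≠ ⊤) (hf : IntegrableOn f A μ) (hg : IntegrableOn g B μ)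
    (h : ∀ u ∈ A, ∀ t ∈ B, f u - g t ≤ C) :
    ⨍ u in A, f u ∂μ - ⨍ t in B, g t ∂μ ≤ C := by
  obtain ⟨u, hu, hfu⟩ := exists_setAverage_le hA₀ hA hf
  obtain ⟨t, ht, hgt⟩ := exists_le_setAverage hB₀ hB hg
  linarith [h u hu t ht]

theorem abs_setAverage_sub_setAverage_le (hA₀ : μ A ≠ 0) (hA : μ A ≠ ⊤)
    (hB₀ : μ B ≠ 0) (hB : μ B ≠ ⊤) (hfA : IntegrableOn f A μ) (hfB : IntegrableOn f B μ)
    (hgA : IntegrableOn g A μ) (hgB : IntegrableOn g B μ)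
    (h : ∀ u ∈ A, ∀ t ∈ B, |f t - f u| ≤ g t - g u) :
    |⨍ t in B, f t ∂μ - ⨍ u in A, f u ∂μ| ≤ ⨍ t in B, g t ∂μ - ⨍ u in A, g u ∂μ := by
  have up := setAverage_sub_setAverage_le (f := fun x => g x - f x) (g := fun x => g x - f x)
    (C := 0) hA₀ hA hB₀ hB (hgA.sub hfA) (hgB.sub hfB)
    fun u hu t ht => by linarith [le_abs_self (f t - f u), h u hu t ht]
  have down := setAverage_sub_setAverage_le (f := fun x => g x + f x) (g := fun x => g x + f x)
    (C := 0) hA₀ hA hB₀ hB (hgA.add hfA) (hgB.add hfB)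
    fun u hu t ht => by linarith [neg_abs_le (f t - f u), h u hu t ht]
  rw [average_sub hgA hfA, average_sub hgB hfB] at up
  rw [average_add hgA hfA, average_add hgB hfB] at down
  exact abs_sub_le_iff.2 ⟨by linarith, by linarith⟩

end MeasureTheory

section BoundedVariation

variable {α : Type*} [LinearOrder α] [TopologicalSpace α] [OrderClosedTopology α]
  [MeasurableSpace α] [BorelSpace α] {μ : Measure α} {f : α → ℝ} {s t : Set α}

theorem LocallyBoundedVariationOn.integrableOn_of_bounded (hf : LocallyBoundedVariationOn f s)
    {M : ℝ} (hM : ∀ y ∈ s, |f y| ≤ M) (hts : t ⊆ s) (ht : MeasurableSet t) (hμ : μ t ≠ ⊤) :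
    IntegrableOn f t μ := by
  obtain ⟨p, q, hp, hq, rfl⟩ := hf.exists_monotoneOn_sub_monotoneOn
  have : IsFiniteMeasure (μ.restrict t) := isFiniteMeasure_restrict.2 hμ
  refine Integrable.of_bound (C := M) ?_ ((ae_restrict_iff' ht).2 (ae_of_all _ fun y hy => ?_))
  · exact ((aemeasurable_restrict_of_monotoneOn ht (hp.mono hts)).sub
      (aemeasurable_restrict_of_monotoneOn ht (hq.mono hts))).aestronglyMeasurable
  · exact hM y (hts hy)

theorem BoundedVariationOn.integrableOn (hf : BoundedVariationOn f s) (hts : t ⊆ s)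
    (ht : MeasurableSet t) (hμ : μ t ≠ ⊤) : IntegrableOn f t μ := by
  rcases t.eq_empty_or_nonempty with rfl | ⟨y₀, hy₀⟩
  · exact integrableOn_empty
  refine hf.locallyBoundedVariationOn.integrableOn_of_bounded
    (M := |f y₀| + (eVariationOn f s).toReal) (fun y hy => ?_) hts ht hμ
  calc |f y| ≤ |f y₀| + |f y - f y₀| := by linarith [abs_sub_abs_le_abs_sub (f y) (f y₀)]
    _ ≤ |f y₀| + (eVariationOn f s).toReal := by
      rw [← Real.dist_eq]; gcongr; exact hf.dist_le hy (hts hy₀)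

end BoundedVariation

theorem projection_total_variation_bound (a b : ℝ) (β : ℝ → ℝ) (I : ℕ) (x : ℕ → ℝ)
    (hx : StrictMono x) (hx0 : x 0 = a) (hxI : x (I + 1) = b)
    (hBV : BoundedVariationOn β (Set.Ioo a b)) :
    ∑ i ∈ Finset.range I,
        |(⨍ t in Set.Ioo (x (i + 1)) (x (i + 2)), β t) -
          ⨍ t in Set.Ioo (x i) (x (i + 1)), β t| ≤
      (eVariationOn β (Set.Ioo a b)).toReal := by
  set s := Set.Ioo a b
  have hJs (n : ℕ) (hn : n ≤ I) : Set.Ioo (x n) (x (n + 1)) ⊆ s :=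
    Set.Ioo_subset_Ioo (hx0 ▸ hx.monotone n.zero_le) (hxI ▸ hx.monotone (by omega))
  have hJ₀ (n : ℕ) : volume (Set.Ioo (x n) (x (n + 1))) ≠ 0 := by
    simp [hx (Nat.lt_succ_self n)]
  have hJ (n : ℕ) : volume (Set.Ioo (x n) (x (n + 1))) ≠ ⊤ := measure_Ioo_lt_top.ne
  obtain ⟨t₀, ht₀⟩ : s.Nonempty := Set.nonempty_Ioo.2 (hx0 ▸ hxI ▸ hx (Nat.succ_pos I))
  have hloc := hBV.locallyBoundedVariationOn
  set V := variationOnFromTo β s t₀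
  have hβ (n : ℕ) (hn : n ≤ I) : IntegrableOn β (Set.Ioo (x n) (x (n + 1))) :=
    hBV.integrableOn (hJs n hn) measurableSet_Ioo (hJ n)
  have hV (n : ℕ) (hn : n ≤ I) : IntegrableOn V (Set.Ioo (x n) (x (n + 1))) :=
    (variationOnFromTo.monotoneOn hloc ht₀).locallyBoundedVariationOn.integrableOn_of_bounded
      (fun _ _ => variationOnFromTo.abs_le_eVariationOn hBV) (hJs n hn) measurableSet_Ioo (hJ n)
  calc _ ≤ ∑ i ∈ Finset.range I, ((⨍ t in Set.Ioo (x (i + 1)) (x (i + 2)), V t) -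
          ⨍ t in Set.Ioo (x i) (x (i + 1)), V t) := by
        refine Finset.sum_le_sum fun i hi => ?_
        have hi : i + 1 ≤ I := Finset.mem_range.1 hi
        exact abs_setAverage_sub_setAverage_le (hJ₀ i) (hJ i) (hJ₀ (i + 1)) (hJ (i + 1))
          (hβ i (by omega)) (hβ (i + 1) hi) (hV i (by omega)) (hV (i + 1) hi)
          fun u hu t ht => variationOnFromTo.abs_sub_le_sub_of_le hloc ht₀
            (hJs i (by omega) hu) (hJs (i + 1) hi ht) (hu.2.trans ht.1).le
    _ = (⨍ t in Set.Ioo (x I) (x (I + 1)), V t) - ⨍ t in Set.Ioo (x 0) (x 1), V t :=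
        Finset.sum_range_sub (fun n => ⨍ t in Set.Ioo (x n) (x (n + 1)), V t) I
    _ ≤ _ := setAverage_sub_setAverage_le (hJ₀ I) (hJ I) (hJ₀ 0) (hJ 0) (hV I le_rfl)
        (hV 0 I.zero_le) fun u hu t ht => by
          rw [variationOnFromTo.sub_right hloc ht₀ (hJs I le_rfl hu) (hJs 0 I.zero_le ht)]
          exact (le_abs_self _).trans (variationOnFromTo.abs_le_eVariationOn hBV)
end

section
/- Consider an explicit 1D three-point scheme α^{n+1}_i = α^n_i(1 − c_i) + a_i α^n_{i+1} + b_i α^n_{i-1} with a_i, b_i ≥ 0 and c_i = a_i + b_i ≤ 1 for all i, on a bi-infinite (or periodic) index set. Then ∑_i |α^{n+1}_{i+1} − α^{n+1}_i| ≤ ∑_i |α^n_{i+1} − α^n_i|, i.e. the discrete total variation is nonincreasing. -/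
/-!
Writing `Δ i = α (i + 1) - α i`, the scheme gives
`Δ' i = (1 - C i - D i) Δ i + C (i + 1) Δ (i + 1) + D (i - 1) Δ (i - 1)`, a combination with
nonnegative coefficients, so `|Δ' i|` is bounded by the same combination of the `|Δ j|`.
Summing over `i`, the shifted terms reindex to `C i |Δ i|` and `D i |Δ i|`; the mass of each
`|Δ i|` is only redistributed among neighbouring interfaces, so the total is `∑ |Δ i|`.
-/

theorem HasSum.redistribute {v C D : ℤ → ℝ} {s c d : ℝ} (hv : HasSum v s)
    (hC : HasSum (fun i => C i * v i) c) (hD : HasSum (fun i => D i * v i) d) :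
    HasSum (fun i => (1 - C i - D i) * v i + C (i + 1) * v (i + 1) + D (i - 1) * v (i - 1))
      s := by
  have hstay : HasSum (fun i => (1 - C i - D i) * v i) (s - c - d) := by
    simpa only [sub_mul, one_mul] using (hv.sub hC).sub hD
  have hright : HasSum (fun i => C (i + 1) * v (i + 1)) c :=
    (Equiv.addRight (1 : ℤ)).hasSum_iff.mpr hC
  have hleft : HasSum (fun i => D (i - 1) * v (i - 1)) d :=
    (Equiv.subRight (1 : ℤ)).hasSum_iff.mpr hD
  have htotal : s - c - d + c + d = s := by abel
  simpa only [htotal] using (hstay.add hright).add hleft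

theorem Summable.mul_of_nonneg_of_le_one {ι : Type*} {w v : ι → ℝ} (hv : Summable v)
    (hv0 : ∀ i, 0 ≤ v i) (hw0 : ∀ i, 0 ≤ w i) (hw1 : ∀ i, w i ≤ 1) :
    Summable fun i => w i * v i :=
  hv.of_nonneg_of_le (fun i => mul_nonneg (hw0 i) (hv0 i))
    fun i => mul_le_of_le_one_left (hv0 i) (hw1 i)

section IncrementalScheme

variable {α α' C D : ℤ → ℝ}

theorem incremental_scheme_sub
    (hscheme : ∀ i, α' i = α i + C i * (α (i + 1) - α i) - D (i - 1) * (α i - α (i - 1)))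
    (i : ℤ) :
    α' (i + 1) - α' i = (1 - C i - D i) * (α (i + 1) - α i)
      + C (i + 1) * (α (i + 1 + 1) - α (i + 1)) + D (i - 1) * (α (i - 1 + 1) - α (i - 1)) := by
  rw [hscheme (i + 1), hscheme i, add_sub_cancel_right, sub_add_cancel]
  ring

theorem incremental_scheme_abs_sub_le (hC : ∀ i, 0 ≤ C i) (hD : ∀ i, 0 ≤ D i)
    (hCD : ∀ i, C i + D i ≤ 1)
    (hscheme : ∀ i, α' i = α i + C i * (α (i + 1) - α i) - D (i - 1) * (α i - α (i - 1)))
    (i : ℤ) :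
    |α' (i + 1) - α' i| ≤ (1 - C i - D i) * |α (i + 1) - α i|
      + C (i + 1) * |α (i + 1 + 1) - α (i + 1)| + D (i - 1) * |α (i - 1 + 1) - α (i - 1)| := by
  rw [incremental_scheme_sub hscheme i]
  have hstay : 0 ≤ 1 - C i - D i := by linarith [hCD i]
  calc _ ≤ |(1 - C i - D i) * (α (i + 1) - α i)|
        + |C (i + 1) * (α (i + 1 + 1) - α (i + 1))| + |D (i - 1) * (α (i - 1 + 1) - α (i - 1))| :=
        abs_add_three _ _ _
    _ = _ := by
        rw [abs_mul, abs_mul, abs_mul, abs_of_nonneg hstay, abs_of_nonneg (hC _),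
          abs_of_nonneg (hD _)]

end IncrementalScheme

theorem harten_tvd (α α' : ℤ → ℝ) (C D : ℤ → ℝ)
    (hC : ∀ i, 0 ≤ C i) (hD : ∀ i, 0 ≤ D i)
    (hCD : ∀ i, C i + D i ≤ 1)
    (hscheme : ∀ i, α' i = α i + C i * (α (i + 1) - α i) - D (i - 1) * (α i - α (i - 1)))
    (hsum : Summable fun i => |α (i + 1) - α i|) :
    ∑' i : ℤ, |α' (i + 1) - α' i| ≤ ∑' i : ℤ, |α (i + 1) - α i| := by
  have hsumC := hsum.mul_of_nonneg_of_le_one (fun _ => abs_nonneg _) hC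
    fun i => by linarith [hD i, hCD i]
  have hsumD := hsum.mul_of_nonneg_of_le_one (fun _ => abs_nonneg _) hD
    fun i => by linarith [hC i, hCD i]
  have hbound := hsum.hasSum.redistribute hsumC.hasSum hsumD.hasSum
  have hle := incremental_scheme_abs_sub_le hC hD hCD hscheme
  exact hasSum_le hle (hbound.summable.of_nonneg_of_le (fun _ => abs_nonneg _) hle).hasSum
    hbound
end
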